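/- Let p be a point sphere complex, f^p a point sphere (isotropic, ⟨f^p,p⟩ = 0), r isotropic with ⟨f^p,r⟩ = 0, and a ∈ ℝ^{4,2} with ⟨a,a⟩ ≠ 0, ⟨r,a⟩ = 0 and ⟨f^p,a⟩ ≠ 0. Let f̂^p be a nonzero isotropic vector in span{σ_a(f^p), r} with ⟨f̂^p,p⟩ = 0 and f̂^p ∉ span{r}, and set γ := span{f^p, f̂^p, r + ⟨r,p⟩p}, the circle of the cyclic circle congruence associated to the Ribaucour pair (span{f^p,r}, σ_a(span{f^p,r})). Then the vector e₁ := a + ⟨a,p⟩p, which spans span{a,p} ∩ p^⊥, satisfies ⟨e₁, v⟩ = 0 for every isotropic v ∈ γ^⊥; consequently, if the induced form on γ has signature (2,1), then e₁ ∈ γ, i.e. the space form vector determined by the evolution lies in the plane of the circle points of every circle of the congruence. Hence, in the space form determined by e₁, the circles of the congruence are geodesics and the Lamé family of the Dupin cyclidic system consists of parallel surfaces of that space form. -/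

import Mathlib

noncomputable section

/-- The symmetric bilinear form of signature (4,2) on ℝ⁶, modelling ℝ^{4,2}. -/
def B (x y : Fin 6 → ℝ) : ℝ :=
  x 0 * y 0 + x 1 * y 1 + x 2 * y 2 + x 3 * y 3 - x 4 * y 4 - x 5 * y 5

/-- The Lie inversion with respect to the linear sphere complex `a`. -/
def lieInv (a x : Fin 6 → ℝ) : Fin 6 → ℝ :=
  x - (2 * B x a / B a a) • a

/-- The induced form on the subspace `W` has signature (2,1) (it admits a
spanning pseudo-orthonormal triple of Gram matrix diag(1,1,-1)); in particular
`W` is 3-dimensional. -/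
def SigTwoOne (W : Submodule ℝ (Fin 6 → ℝ)) : Prop :=
  ∃ u v w : Fin 6 → ℝ, Submodule.span ℝ ({u, v, w} : Set (Fin 6 → ℝ)) = W ∧
    B u u = 1 ∧ B v v = 1 ∧ B w w = -1 ∧ B u v = 0 ∧ B u w = 0 ∧ B v w = 0

lemma B_add_left (x y z : Fin 6 → ℝ) : B (x + y) z = B x z + B y z := by
  simp [B]; ring

lemma B_smul_left (c : ℝ) (x z : Fin 6 → ℝ) : B (c • x) z = c * B x z := by
  simp [B]; ring

/-- The orthogonal complement of a single vector with respect to `B`. -/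
def perpVec (u : Fin 6 → ℝ) : Submodule ℝ (Fin 6 → ℝ) where
  carrier := {x | B x u = 0}
  add_mem' := fun {a b} ha hb => by
    simp only [Set.mem_setOf_eq] at *
    rw [B_add_left, ha, hb, add_zero]
  zero_mem' := by simp [B]
  smul_mem' := fun c x hx => by
    simp only [Set.mem_setOf_eq] at *
    rw [B_smul_left, hx, mul_zero]

/-!
Write `π x = x + ⟨x,p⟩ p`, which is linear in `x` and fixes every vector orthogonal to `p`.
Since `f̂^p = α σ_a(f^p) + β r = α f^p - α c a + β r` with `c = 2⟨f^p,a⟩/⟨a,a⟩ ≠ 0` and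
`α ≠ 0` (as `f̂^p ∉ span{r}`), applying `π` gives `f̂^p = α f^p - α c e₁ + β π(r)`.
Hence `e₁ ∈ γ` outright, which makes the orthogonality and signature claims immediate.
-/

lemma B_symm (x y : Fin 6 → ℝ) : B x y = B y x := by
  simp only [B]; ring

lemma B_sub_left (x y z : Fin 6 → ℝ) : B (x - y) z = B x z - B y z := by
  simp only [B, Pi.sub_apply]; ring

lemma span_singleton_add_smul_eq_span_pair_inf_perpVec {p : Fin 6 → ℝ} (hp : B p p = -1)
    (a : Fin 6 → ℝ) :
    Submodule.span ℝ {a + B a p • p} = Submodule.span ℝ {a, p} ⊓ perpVec p := by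
  apply le_antisymm
  · rw [Submodule.span_le, Set.singleton_subset_iff]
    refine ⟨Submodule.mem_span_pair.mpr ⟨1, B a p, by rw [one_smul]⟩, ?_⟩
    change B (a + B a p • p) p = 0
    rw [B_add_left, B_smul_left, hp]
    ring
  · rintro x ⟨hx, hxp⟩
    obtain ⟨s, t, rfl⟩ := Submodule.mem_span_pair.mp hx
    change B (s • a + t • p) p = 0 at hxp
    rw [B_add_left, B_smul_left, B_smul_left, hp] at hxp
    refine Submodule.mem_span_singleton.mpr ⟨s, ?_⟩
    rw [show t = s * B a p by linarith, smul_add, smul_smul]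

lemma add_smul_mem_span_of_mem_span_lieInv {p fp r a fq : Fin 6 → ℝ} (hfpp : B fp p = 0)
    (ha : B a a ≠ 0) (hfa : B fp a ≠ 0) (hfqp : B fq p = 0)
    (hfqmem : fq ∈ Submodule.span ℝ {lieInv a fp, r})
    (hfqr : fq ∉ Submodule.span ℝ {r}) :
    a + B a p • p ∈ Submodule.span ℝ {fp, fq, r + B r p • p} := by
  obtain ⟨α, β, rfl⟩ := Submodule.mem_span_pair.mp hfqmem
  set c := 2 * B fp a / B a a
  have hc : c ≠ 0 := div_ne_zero (mul_ne_zero two_ne_zero hfa) ha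
  have hα : α ≠ 0 := by
    rintro rfl
    exact hfqr (by simpa using Submodule.smul_mem _ β (Submodule.mem_span_singleton_self r))
  have hcoeff : α * c * B a p = β * B r p := by
    rw [B_add_left, B_smul_left, B_smul_left, lieInv, B_sub_left, B_smul_left,
      hfpp] at hfqp
    linear_combination -hfqp
  have hdecomp : a + B a p • p =
      (α * c)⁻¹ • (α • fp + β • (r + B r p • p) - (α • lieInv a fp + β • r)) := by
    rw [eq_inv_smul_iff₀ (mul_ne_zero hα hc), lieInv]
    linear_combination (norm := module) hcoeff • p
  rw [hdecomp]
  refine Submodule.smul_mem _ _ (Submodule.sub_mem _ (Submodule.add_mem _ ?_ ?_) ?_)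
  · exact Submodule.smul_mem _ _ (Submodule.subset_span (by simp))
  · exact Submodule.smul_mem _ _ (Submodule.subset_span (by simp))
  · exact Submodule.subset_span (by simp)

theorem stmt_12_general (p fp r a : Fin 6 → ℝ) (hp : B p p = -1)
    (hfpp : B fp p = 0)
    (ha : B a a ≠ 0) (hfa : B fp a ≠ 0)
    (fq : Fin 6 → ℝ) (hfqp : B fq p = 0)
    (hfqmem : fq ∈ Submodule.span ℝ ({lieInv a fp, r} : Set (Fin 6 → ℝ)))
    (hfqr : fq ∉ Submodule.span ℝ ({r} : Set (Fin 6 → ℝ)))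
    (γ : Submodule ℝ (Fin 6 → ℝ))
    (hγ : γ = Submodule.span ℝ ({fp, fq, r + B r p • p} : Set (Fin 6 → ℝ)))
    (e₁ : Fin 6 → ℝ) (he₁ : e₁ = a + B a p • p) :
    Submodule.span ℝ ({e₁} : Set (Fin 6 → ℝ)) =
        Submodule.span ℝ ({a, p} : Set (Fin 6 → ℝ)) ⊓ perpVec p ∧
    (∀ v : Fin 6 → ℝ, v ≠ 0 → B v v = 0 → (∀ x ∈ γ, B v x = 0) →
      B e₁ v = 0) ∧
    (SigTwoOne γ → e₁ ∈ γ) := by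
  subst hγ he₁
  have he₁γ := add_smul_mem_span_of_mem_span_lieInv hfpp ha hfa hfqp hfqmem hfqr
  refine ⟨span_singleton_add_smul_eq_span_pair_inf_perpVec hp a, fun v _ _ hv => ?_,
    fun _ => he₁γ⟩
  rw [B_symm]
  exact hv _ he₁γ

/-- With the circle `γ = span{fp, fq, r + ⟨r,p⟩p}` of the
cyclic circle congruence associated to the Ribaucour pair `(span{fp,r},
σ_a(span{fp,r}))`: the space form vector `e₁ = a + ⟨a,p⟩p` spans
`span{a,p} ∩ p^⊥`, is orthogonal to every isotropic vector of `γ^⊥`, and —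
provided `γ` has signature (2,1) — lies in `γ` itself; i.e. the circles of the
congruence are geodesics of the space form determined by `e₁`, so the Lamé
family consists of parallel surfaces in that space form. -/
theorem stmt_12 (p fp r a : Fin 6 → ℝ) (hp : B p p = -1)
    (hfp : fp ≠ 0) (ifp : B fp fp = 0) (hfpp : B fp p = 0)
    (hr : r ≠ 0) (ir : B r r = 0) (hfr : B fp r = 0)
    (ha : B a a ≠ 0) (hra : B r a = 0) (hfa : B fp a ≠ 0)
    (fq : Fin 6 → ℝ) (hfq : fq ≠ 0) (ifq : B fq fq = 0) (hfqp : B fq p = 0)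
    (hfqmem : fq ∈ Submodule.span ℝ ({lieInv a fp, r} : Set (Fin 6 → ℝ)))
    (hfqr : fq ∉ Submodule.span ℝ ({r} : Set (Fin 6 → ℝ)))
    (γ : Submodule ℝ (Fin 6 → ℝ))
    (hγ : γ = Submodule.span ℝ ({fp, fq, r + B r p • p} : Set (Fin 6 → ℝ)))
    (e₁ : Fin 6 → ℝ) (he₁ : e₁ = a + B a p • p) :
    Submodule.span ℝ ({e₁} : Set (Fin 6 → ℝ)) =
        Submodule.span ℝ ({a, p} : Set (Fin 6 → ℝ)) ⊓ perpVec p ∧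
    (∀ v : Fin 6 → ℝ, v ≠ 0 → B v v = 0 → (∀ x ∈ γ, B v x = 0) →
      B e₁ v = 0) ∧
    (SigTwoOne γ → e₁ ∈ γ) :=
  stmt_12_general p fp r a hp hfpp ha hfa fq hfqp hfqmem hfqr γ hγ e₁ he₁
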